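/- arXiv:0808.2544 — 5 statements merged into one kernel-verified Lean document; each statement's English description precedes it below -/
import Mathlib

section
/- Let h : Σ* → Σ* be a monoid morphism on the free monoid over a finite alphabet Σ. Then there exists a positive integer m such that, setting g = h^m, for every letter a ∈ Σ and every n ≥ 1, the set of letters occurring in g^n(a) equals the set of letters occurring in g(a). -/
open FreeMonoid

/-- The set of letters occurring in a word of the free monoid. -/
def alph {α : Type*} [DecidableEq α] (w : FreeMonoid α) : Finset α :=
  (FreeMonoid.toList w).toFinset

/-!
The letters of `h w` are determined by the letters of `w`, through the self-map
`S ↦ ⋃ b ∈ S, alph (h (of b))` of the finite type `Finset α`. In the finite monoid of self-maps of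
`Finset α` some positive power of this map is idempotent, and its exponent is the required `m`.
-/

theorem exists_pos_isIdempotentElem_pow {M : Type*} [Monoid M] [Finite M] (x : M) :
    ∃ m, 0 < m ∧ IsIdempotentElem (x ^ m) := by
  obtain ⟨i, j, hij, heq⟩ := Finite.exists_ne_map_eq_of_infinite (fun k : ℕ => x ^ k)
  wlog hlt : i < j generalizing i j
  · exact this j i hij.symm heq.symm (by omega)
  have shift : ∀ k, i ≤ k → x ^ (k + (j - i)) = x ^ k := by
    intro k hk
    rw [show k + (j - i) = (k - i) + j by omega, pow_add, ← heq, ← pow_add,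
      Nat.sub_add_cancel hk]
  have periodic : ∀ t k, i ≤ k → x ^ (k + t * (j - i)) = x ^ k := by
    intro t
    induction t with
    | zero => simp
    | succ t ih =>
      intro k hk
      rw [add_mul, one_mul, ← add_assoc, shift _ (by omega), ih k hk]
  refine ⟨(i + 1) * (j - i), Nat.mul_pos i.succ_pos (by omega), ?_⟩
  rw [IsIdempotentElem, ← pow_add]
  exact periodic _ _ (le_trans i.le_succ (Nat.le_mul_of_pos_right _ (by omega)))

section

variable {α : Type*} [DecidableEq α]

@[simp] theorem alph_one : alph (1 : FreeMonoid α) = ∅ := rfl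

@[simp] theorem alph_of (a : α) : alph (of a) = {a} := rfl

@[simp] theorem alph_mul (u v : FreeMonoid α) : alph (u * v) = alph u ∪ alph v := by
  simp [alph]

def letterImage (h : FreeMonoid α →* FreeMonoid α) (S : Finset α) : Finset α :=
  S.biUnion fun b => alph (h (of b))

theorem alph_semiconj_letterImage (h : FreeMonoid α →* FreeMonoid α) :
    Function.Semiconj alph h (letterImage h) := by
  intro w
  induction w using FreeMonoid.recOn with
  | one => simp [letterImage]
  | of_mul x xs ih => simp_all [letterImage]

end

/-- For a morphism `h` of the free monoid over a finite alphabet, there is a power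
`g = h^m` (`m ≥ 1`) such that for every letter `a` and every `n ≥ 1`, the set of
letters occurring in `g^n(a)` equals the set of letters occurring in `g(a)`. -/
theorem exists_power_alph_stable {α : Type*} [Fintype α] [DecidableEq α]
    (h : FreeMonoid α →* FreeMonoid α) :
    ∃ m : ℕ, 1 ≤ m ∧ ∀ (a : α) (n : ℕ), 1 ≤ n →
      alph ((⇑h)^[m * n] (FreeMonoid.of a)) = alph ((⇑h)^[m] (FreeMonoid.of a)) := by
  have : Finite (Function.End (Finset α)) := Pi.finite
  obtain ⟨m, hm, hidem⟩ :=
    exists_pos_isIdempotentElem_pow (show Function.End (Finset α) from letterImage h)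
  refine ⟨m, hm, fun a n hn => ?_⟩
  have hsemi := alph_semiconj_letterImage h
  rw [hsemi.iterate_right, hsemi.iterate_right, Function.iterate_mul]
  exact congrFun (hidem.pow_eq (n := n) (by omega)) _
end

section
/- Let b ≥ 2 be an integer and let (n_j)_{j≥1} be a strictly increasing sequence of positive integers with n_{j+1} ≥ 2·n_j for all j. Let ξ = Σ_{j≥1} b^{−n_j} and let μ(ξ) be the irrationality exponent of ξ. Then μ(ξ) ≥ limsup_{j→∞} n_{j+1}/n_j. -/
/-! The truncation `p_J / b^{n_J}` of `ξ = ∑ b^{-n_j}` after the `J`-th term has denominator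
`q = b^{n_J}`. Since `b ≥ 2` and the exponents grow by at least one at each step, the tail is at
most twice its first term, so `|ξ - p_J/q| ≤ 2 b^{-n_{J+1}} = 2 q^{-n_{J+1}/n_J}`. For `μ` below
the limsup of `n_{J+1}/n_J`, infinitely many `J` have `μ n_J + 1 < n_{J+1}`, and for them this
error is below `q^{-μ}`. -/

open Filter

section LacunarySeries

variable {x : ℝ} {n : ℕ → ℕ}

lemma inv_pow_apply_le_of_strictMono (hx : 2 ≤ x) (hn : StrictMono n) (i : ℕ) :
    (x ^ n i)⁻¹ ≤ (x ^ n 0)⁻¹ * (1 / 2) ^ i := by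
  have hx0 : 0 < x := by linarith
  rw [one_div, inv_pow, ← mul_inv]
  apply inv_anti₀ (by positivity)
  calc x ^ n 0 * 2 ^ i ≤ x ^ n 0 * x ^ i := by gcongr
    _ = x ^ (i + n 0) := by rw [pow_add, mul_comm]
    _ ≤ x ^ n i := pow_le_pow_right₀ (by linarith) (by simpa using hn.add_le_nat i 0)

lemma summable_inv_pow_apply_of_strictMono (hx : 2 ≤ x) (hn : StrictMono n) :
    Summable fun i => (x ^ n i)⁻¹ :=
  (summable_geometric_two.mul_left _).of_nonneg_of_le (fun i => by positivity)
    (inv_pow_apply_le_of_strictMono hx hn)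

lemma tsum_inv_pow_apply_le_of_strictMono (hx : 2 ≤ x) (hn : StrictMono n) :
    ∑' i, (x ^ n i)⁻¹ ≤ 2 / x ^ n 0 :=
  calc ∑' i, (x ^ n i)⁻¹ ≤ ∑' i, (x ^ n 0)⁻¹ * (1 / 2) ^ i :=
        (summable_inv_pow_apply_of_strictMono hx hn).tsum_le_tsum
          (inv_pow_apply_le_of_strictMono hx hn) (summable_geometric_two.mul_left _)
    _ = 2 / x ^ n 0 := by rw [tsum_mul_left, tsum_geometric_two, inv_mul_eq_div]

lemma sum_range_inv_pow_eq_div (hx : x ≠ 0) (hn : Monotone n) (J : ℕ) :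
    ∑ j ∈ Finset.range (J + 1), (x ^ n j)⁻¹ =
      (∑ j ∈ Finset.range (J + 1), x ^ (n J - n j)) / x ^ n J := by
  rw [Finset.sum_div]
  refine Finset.sum_congr rfl fun j hj => ?_
  have hjJ : n j ≤ n J := hn (Nat.lt_succ_iff.mp (Finset.mem_range.mp hj))
  rw [← Nat.sub_add_cancel hjJ, pow_add, Nat.add_sub_cancel,
    div_mul_cancel_left₀ (pow_ne_zero _ hx)]

end LacunarySeries

/-- The numerator `p_J` of the truncation `∑_{j ≤ J} b^{-n_j} = p_J / b^{n_J}`. -/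
def truncationNumerator (b : ℕ) (n : ℕ → ℕ) (J : ℕ) : ℤ :=
  ∑ j ∈ Finset.range (J + 1), (b : ℤ) ^ (n J - n j)

lemma abs_tsum_inv_pow_sub_truncation_le {b : ℕ} (hb : 2 ≤ b) {n : ℕ → ℕ} (hn : StrictMono n)
    (J : ℕ) :
    |∑' j, ((b : ℝ) ^ n j)⁻¹ - truncationNumerator b n J / ((b ^ n J : ℕ) : ℝ)| ≤
      2 / (b : ℝ) ^ n (J + 1) := by
  have hb' : (2 : ℝ) ≤ b := by exact_mod_cast hb
  have htail : ∑' j, ((b : ℝ) ^ n j)⁻¹ - truncationNumerator b n J / ((b ^ n J : ℕ) : ℝ) =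
      ∑' i, ((b : ℝ) ^ n (i + (J + 1)))⁻¹ := by
    rw [truncationNumerator, Nat.cast_pow, Int.cast_sum]
    simp only [Int.cast_pow, Int.cast_natCast]
    rw [← sum_range_inv_pow_eq_div (by positivity) hn.monotone,
      ← (summable_inv_pow_apply_of_strictMono hb' hn).sum_add_tsum_nat_add (J + 1),
      add_sub_cancel_left]
  have hshift : StrictMono fun i => n (i + (J + 1)) := hn.comp (strictMono_id.add_const _)
  rw [htail, abs_of_nonneg (tsum_nonneg fun i => by positivity)]
  simpa using tsum_inv_pow_apply_le_of_strictMono hb' hshift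

lemma two_div_pow_lt_one_div_pow_rpow {x : ℝ} (hx : 2 ≤ x) {m k : ℕ} {μ : ℝ}
    (h : μ * m + 1 < k) : 2 / x ^ k < 1 / (x ^ m) ^ μ := by
  have hx0 : 0 < x := by linarith
  have hgap : 2 < x ^ ((k : ℝ) - m * μ) :=
    calc (2 : ℝ) ≤ x ^ (1 : ℝ) := by rwa [Real.rpow_one]
      _ < x ^ ((k : ℝ) - m * μ) := Real.rpow_lt_rpow_of_exponent_lt (by linarith) (by linarith)
  calc 2 / x ^ k < x ^ ((k : ℝ) - m * μ) / x ^ k := by gcongr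
    _ = 1 / (x ^ m) ^ μ := by
      rw [← Real.rpow_natCast, ← Real.rpow_natCast, ← Real.rpow_mul hx0.le, Real.rpow_sub hx0,
        div_div_cancel_left' (by positivity), one_div]

lemma frequently_mul_add_one_lt_of_lt_limsup {ι : Type*} {l : Filter ι} {u v : ι → ℝ} {μ : ℝ}
    (hv : Tendsto v l atTop) (h : (μ : EReal) < limsup (fun i => ((u i / v i : ℝ) : EReal)) l) :
    ∃ᶠ i in l, μ * v i + 1 < u i := by
  obtain ⟨μ', hμμ', hμ'⟩ := EReal.exists_between_coe_real h
  have hμμ' : μ < μ' := EReal.coe_lt_coe_iff.mp hμμ'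
  have hratio : ∃ᶠ i in l, μ' < u i / v i :=
    (frequently_lt_of_lt_limsup (by isBoundedDefault) hμ').mono fun i hi =>
      EReal.coe_lt_coe_iff.mp hi
  have hlarge : ∀ᶠ i in l, 1 < (μ' - μ) * v i :=
    (hv.const_mul_atTop (sub_pos.mpr hμμ')).eventually_gt_atTop 1
  refine (hratio.and_eventually (hlarge.and (hv.eventually_gt_atTop 0))).mono ?_
  rintro i ⟨hi, hlarge, hpos⟩
  rw [lt_div_iff₀ hpos] at hi
  linarith

theorem irrationality_exponent_lower_bound_general (b : ℕ) (hb : 2 ≤ b) (n : ℕ → ℕ)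
    (hmono : StrictMono n) :
    ∀ μ : ℝ, (μ : EReal) < limsup (fun j => (((n (j + 1) : ℝ) / (n j : ℝ) : ℝ) : EReal)) atTop →
      {pq : ℤ × ℕ | 0 < pq.2 ∧
        |(∑' j : ℕ, ((b : ℝ) ^ (n j))⁻¹) - (pq.1 : ℝ) / (pq.2 : ℝ)| <
          1 / (pq.2 : ℝ) ^ μ}.Infinite := by
  intro μ hμ
  have hgood : {J : ℕ | μ * n J + 1 < n (J + 1)}.Infinite :=
    Nat.frequently_atTop_iff_infinite.mp <| frequently_mul_add_one_lt_of_lt_limsup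
      (u := fun j => (n (j + 1) : ℝ)) (tendsto_natCast_atTop_atTop.comp hmono.tendsto_atTop) hμ
  have hinj : Function.Injective fun J => (truncationNumerator b n J, b ^ n J) :=
    fun J₁ J₂ h => hmono.injective (Nat.pow_right_injective hb (congrArg Prod.snd h))
  refine (hgood.image hinj.injOn).mono ?_
  rintro _ ⟨J, hJ, rfl⟩
  refine ⟨by positivity, (abs_tsum_inv_pow_sub_truncation_le hb hmono J).trans_lt ?_⟩
  rw [Nat.cast_pow]
  exact two_div_pow_lt_one_div_pow_rpow (by exact_mod_cast hb) hJ

/-- Lower bound for the irrationality exponent of a lacunary series: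
`μ(ξ) ≥ limsup n_{j+1}/n_j`, expressed as: for every real `μ` below this limsup,
there are infinitely many rational solutions `p/q` of `|ξ - p/q| < 1/q^μ`. -/
theorem irrationality_exponent_lower_bound (b : ℕ) (hb : 2 ≤ b) (n : ℕ → ℕ)
    (hmono : StrictMono n) (hpos : ∀ j, 0 < n j) (hlac : ∀ j, 2 * n j ≤ n (j + 1)) :
    ∀ μ : ℝ, (μ : EReal) < limsup (fun j => (((n (j + 1) : ℝ) / (n j : ℝ) : ℝ) : EReal)) atTop →
      {pq : ℤ × ℕ | 0 < pq.2 ∧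
        |(∑' j : ℕ, ((b : ℝ) ^ (n j))⁻¹) - (pq.1 : ℝ) / (pq.2 : ℝ)| <
          1 / (pq.2 : ℝ) ^ μ}.Infinite :=
  irrationality_exponent_lower_bound_general b hb n hmono
end

section
/- For every integer b ≥ 2 and every irrational real number ξ, the exponents satisfy v'_b(ξ) ≥ v_b(ξ) ≥ 0, and μ(ξ) ≥ 1 + max{v'_b(ξ), 1} ≥ 1 + max{v_b(ξ), 1}. -/
/-!
Since `‖(b - 1) x‖ ≤ (b - 1) ‖x‖`, a solution `n` for `v_b` with exponent `v` gives the solution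
`(n, 1)` for `v'_b` with any exponent `w < v` once `n` is large. A solution `(r, s)` for `v'_b` with
exponent `v ≥ 0` makes `q = b^r (b^s - 1) ≤ b^(r+s)` the denominator of a rational approximation
`|ξ - p/q| < q^(-1-v)`, and `q ≥ max(r, s)` is unbounded along infinitely many pairs. Together with
Dirichlet's `μ(ξ) ≥ 2` this gives `μ(ξ) ≥ 1 + max(v'_b(ξ), 1)`.
-/

open Filter Set

/-- Distance from a real number to the nearest integer. -/
noncomputable def distNearestInt (x : ℝ) : ℝ := |x - round x|

/-- The exponent `v_b(ξ)`: supremum (in `EReal`) of the real numbers `v` such that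
`‖b^n ξ‖ < (b^n)^{-v}` has infinitely many solutions in positive integers `n`. -/
noncomputable def vb (b : ℕ) (ξ : ℝ) : EReal :=
  sSup ((fun v : ℝ => (v : EReal)) ''
    {v : ℝ | {n : ℕ | 0 < n ∧ distNearestInt ((b : ℝ) ^ n * ξ) < ((b : ℝ) ^ n) ^ (-v)}.Infinite})

/-- The exponent `v'_b(ξ)`: supremum (in `EReal`) of the real numbers `v` such that
`‖b^r (b^s - 1) ξ‖ < (b^{r+s})^{-v}` has infinitely many solutions in positive integers `r, s`. -/
noncomputable def vb' (b : ℕ) (ξ : ℝ) : EReal :=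
  sSup ((fun v : ℝ => (v : EReal)) ''
    {v : ℝ | {rs : ℕ × ℕ | 0 < rs.1 ∧ 0 < rs.2 ∧
        distNearestInt ((b : ℝ) ^ rs.1 * ((b : ℝ) ^ rs.2 - 1) * ξ) <
          ((b : ℝ) ^ (rs.1 + rs.2)) ^ (-v)}.Infinite})

/-- The irrationality exponent `μ(ξ)`: supremum (in `EReal`) of the real numbers `μ` such
that `|ξ - p/q| < 1/q^μ` has infinitely many rational solutions `p/q`. -/
noncomputable def irrationalityExponent (ξ : ℝ) : EReal :=
  sSup ((fun v : ℝ => (v : EReal)) ''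
    {μ : ℝ | {pq : ℤ × ℕ | 0 < pq.2 ∧
        |ξ - (pq.1 : ℝ) / (pq.2 : ℝ)| < 1 / (pq.2 : ℝ) ^ μ}.Infinite})

-- The sets whose infinitude defines `vb`, `vb'` and `irrationalityExponent`.
def vbSolutions (b : ℕ) (ξ v : ℝ) : Set ℕ :=
  {n | 0 < n ∧ distNearestInt ((b : ℝ) ^ n * ξ) < ((b : ℝ) ^ n) ^ (-v)}

def vb'Solutions (b : ℕ) (ξ v : ℝ) : Set (ℕ × ℕ) :=
  {rs | 0 < rs.1 ∧ 0 < rs.2 ∧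
    distNearestInt ((b : ℝ) ^ rs.1 * ((b : ℝ) ^ rs.2 - 1) * ξ) < ((b : ℝ) ^ (rs.1 + rs.2)) ^ (-v)}

def rationalApproximations (ξ μ : ℝ) : Set (ℤ × ℕ) :=
  {pq | 0 < pq.2 ∧ |ξ - (pq.1 : ℝ) / (pq.2 : ℝ)| < 1 / (pq.2 : ℝ) ^ μ}

section sSupCoe

variable {S T : Set ℝ}

lemma sSup_coe_image_le_of_forall_lt (h : ∀ v ∈ S, ∀ w < v, w ∈ T) :
    sSup (((↑) : ℝ → EReal) '' S) ≤ sSup (((↑) : ℝ → EReal) '' T) := by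
  refine sSup_le ?_
  rintro _ ⟨v, hv, rfl⟩
  refine EReal.ge_of_forall_gt_iff_ge.1 fun w hw ↦ le_sSup ⟨w, h v hv w ?_, rfl⟩
  exact_mod_cast hw

lemma one_add_sSup_coe_image_le {a : EReal} (h : ∀ v ∈ S, ((1 + v : ℝ) : EReal) ≤ a) :
    1 + sSup (((↑) : ℝ → EReal) '' S) ≤ a := by
  refine EReal.add_le_of_forall_lt fun c hc d hd ↦ ?_
  obtain ⟨_, ⟨v, hv, rfl⟩, hdv⟩ := lt_sSup_iff.1 hd
  calc c + d ≤ 1 + (v : EReal) := (EReal.add_lt_add hc hdv).le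
    _ = ((1 + v : ℝ) : EReal) := by norm_cast
    _ ≤ a := h v hv

end sSupCoe

lemma distNearestInt_lt_one (x : ℝ) : distNearestInt x < 1 :=
  (abs_sub_round x).trans_lt (by norm_num)

lemma distNearestInt_intCast_mul_le (k : ℤ) (x : ℝ) :
    distNearestInt (k * x) ≤ |(k : ℝ)| * distNearestInt x :=
  calc distNearestInt (k * x) ≤ |k * x - ((k * round x : ℤ) : ℝ)| := round_le _ _
    _ = |(k : ℝ)| * distNearestInt x := by
      rw [distNearestInt, ← abs_mul, mul_sub]
      push_cast
      rfl

lemma abs_sub_round_mul_div (ξ : ℝ) {q : ℝ} (hq : 0 < q) :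
    |ξ - round (q * ξ) / q| = distNearestInt (q * ξ) / q := by
  have h : ξ - round (q * ξ) / q = (q * ξ - round (q * ξ)) / q := by field_simp
  rw [h, abs_div, abs_of_pos hq, distNearestInt]

lemma Set.Infinite.image_of_forall_le {s : Set (ℕ × ℕ)} (hs : s.Infinite) {f : ℕ × ℕ → ℕ}
    (hf : ∀ x ∈ s, x.1 ≤ f x ∧ x.2 ≤ f x) : (f '' s).Infinite := by
  intro hfin
  obtain ⟨M, hM⟩ := hfin.bddAbove
  refine hs (((finite_Iic M).prod (finite_Iic M)).subset fun x hx ↦ ?_)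
  have hxM := hM (mem_image_of_mem f hx)
  exact ⟨(hf x hx).1.trans hxM, (hf x hx).2.trans hxM⟩

lemma vbSolutions_zero_infinite (b : ℕ) (ξ : ℝ) :
    (vbSolutions b ξ 0).Infinite := by
  refine (Ioi_infinite 0).mono fun n hn ↦ ⟨hn, ?_⟩
  rw [neg_zero, Real.rpow_zero]
  exact distNearestInt_lt_one _

lemma vb_nonneg (b : ℕ) (ξ : ℝ) : 0 ≤ vb b ξ :=
  le_sSup ⟨0, vbSolutions_zero_infinite b ξ, rfl⟩

lemma mk_one_mem_vb'Solutions {b n : ℕ} {ξ v w : ℝ} (hb : 1 ≤ b) (hn : n ∈ vbSolutions b ξ v)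
    (hnw : 1 + w ≤ n * (v - w)) : (n, 1) ∈ vb'Solutions b ξ w := by
  obtain ⟨hn0, hdist⟩ := hn
  refine ⟨hn0, one_pos, ?_⟩
  have hb1 : (1 : ℝ) ≤ b := by exact_mod_cast hb
  have hpos : 0 < ((b : ℝ) ^ n) ^ (-v) := by positivity
  have hk : ((b - 1 : ℤ) : ℝ) = (b : ℝ) - 1 := by push_cast; ring
  calc distNearestInt ((b : ℝ) ^ n * ((b : ℝ) ^ 1 - 1) * ξ)
        = distNearestInt (((b : ℝ) - 1) * ((b : ℝ) ^ n * ξ)) := by ring_nf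
    _ ≤ ((b : ℝ) - 1) * distNearestInt ((b : ℝ) ^ n * ξ) := by
      have h := distNearestInt_intCast_mul_le (b - 1) ((b : ℝ) ^ n * ξ)
      rwa [hk, abs_of_nonneg (by linarith)] at h
    _ ≤ ((b : ℝ) - 1) * ((b : ℝ) ^ n) ^ (-v) := by gcongr
    _ < (b : ℝ) ^ (1 + n * -v) := by
      rw [Real.rpow_add (by linarith), Real.rpow_one, Real.rpow_natCast_mul (by linarith)]
      linarith
    _ ≤ (b : ℝ) ^ (((n + 1 : ℕ) : ℝ) * -w) := by
      apply Real.rpow_le_rpow_of_exponent_le hb1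
      push_cast
      linarith
    _ = ((b : ℝ) ^ (n + 1)) ^ (-w) := Real.rpow_natCast_mul (by linarith) _ _

lemma vb'Solutions_infinite_of_lt {b : ℕ} {ξ v w : ℝ} (hb : 1 ≤ b)
    (hv : (vbSolutions b ξ v).Infinite) (hw : w < v) : (vb'Solutions b ξ w).Infinite := by
  obtain ⟨N, hN⟩ := exists_nat_ge ((1 + w) / (v - w))
  have hlarge : (vbSolutions b ξ v \ {n | n < N}).Infinite := hv.sdiff (finite_lt_nat N)
  refine (hlarge.image (f := fun n ↦ (n, 1)) fun _ _ _ _ h ↦ (Prod.ext_iff.1 h).1).mono ?_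
  rintro _ ⟨n, ⟨hn, hNn⟩, rfl⟩
  refine mk_one_mem_vb'Solutions hb hn ?_
  have hNn : (N : ℝ) ≤ n := by exact_mod_cast not_lt.1 hNn
  rw [div_le_iff₀ (sub_pos.2 hw)] at hN
  nlinarith

lemma vb_le_vb' {b : ℕ} (hb : 1 ≤ b) (ξ : ℝ) : vb b ξ ≤ vb' b ξ :=
  sSup_coe_image_le_of_forall_lt fun _ hv _ hw ↦ vb'Solutions_infinite_of_lt hb hv hw

lemma mk_round_mem_rationalApproximations {ξ v : ℝ} {q : ℕ} (hq : 0 < q)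
    (h : distNearestInt (q * ξ) < (q : ℝ) ^ (-v)) :
    (round (q * ξ), q) ∈ rationalApproximations ξ (1 + v) := by
  have hqR : (0 : ℝ) < q := by exact_mod_cast hq
  refine ⟨hq, ?_⟩
  calc |ξ - (round ((q : ℝ) * ξ) : ℝ) / q| = distNearestInt (q * ξ) / q :=
        abs_sub_round_mul_div ξ hqR
    _ < (q : ℝ) ^ (-v) / q := by gcongr
    _ = 1 / (q : ℝ) ^ (1 + v) := by
      rw [Real.rpow_neg hqR.le, Real.rpow_add hqR, Real.rpow_one]
      field_simp

section Denominator

variable {b : ℕ} (hb : 2 ≤ b)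
include hb

lemma le_pow_mul_pow_sub_one {r s : ℕ} (hs : 0 < s) :
    r ≤ b ^ r * (b ^ s - 1) ∧ s ≤ b ^ r * (b ^ s - 1) := by
  have hs' : s ≤ b ^ s - 1 := Nat.le_sub_one_of_lt (Nat.lt_pow_self hb)
  exact ⟨(Nat.lt_pow_self hb).le.trans (Nat.le_mul_of_pos_right _ (hs.trans_le hs')),
    hs'.trans (Nat.le_mul_of_pos_left _ (by positivity))⟩

lemma mk_mem_rationalApproximations_of_mem_vb'Solutions {ξ v : ℝ} (hv : 0 ≤ v) {rs : ℕ × ℕ}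
    (hrs : rs ∈ vb'Solutions b ξ v) :
    (round ((b ^ rs.1 * (b ^ rs.2 - 1) : ℕ) * ξ), b ^ rs.1 * (b ^ rs.2 - 1)) ∈
      rationalApproximations ξ (1 + v) := by
  obtain ⟨-, hs, hdist⟩ := hrs
  have hbs : 1 ≤ b ^ rs.2 := Nat.one_le_pow _ _ (by omega)
  have hq : ((b ^ rs.1 * (b ^ rs.2 - 1) : ℕ) : ℝ) = (b : ℝ) ^ rs.1 * ((b : ℝ) ^ rs.2 - 1) := by
    push_cast [Nat.cast_sub hbs]; ring
  have hq0 : 0 < b ^ rs.1 * (b ^ rs.2 - 1) := (le_pow_mul_pow_sub_one hb hs).2.trans_lt' hs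
  refine mk_round_mem_rationalApproximations hq0 ?_
  have hqR : (0 : ℝ) < (b : ℝ) ^ rs.1 * ((b : ℝ) ^ rs.2 - 1) := by rw [← hq]; exact_mod_cast hq0
  rw [hq]
  refine hdist.trans_le (Real.rpow_le_rpow_of_nonpos hqR ?_ (neg_nonpos.2 hv))
  rw [pow_add]
  gcongr
  linarith

lemma rationalApproximations_infinite_of_vb'Solutions {ξ v : ℝ} (hv : 0 ≤ v)
    (h : (vb'Solutions b ξ v).Infinite) : (rationalApproximations ξ (1 + v)).Infinite := by
  refine Infinite.of_image Prod.snd ((h.image_of_forall_le fun rs hrs ↦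
    le_pow_mul_pow_sub_one hb hrs.2.1).mono ?_)
  rintro _ ⟨rs, hrs, rfl⟩
  exact ⟨_, mk_mem_rationalApproximations_of_mem_vb'Solutions hb hv hrs, rfl⟩

end Denominator

lemma two_le_irrationalityExponent {ξ : ℝ} (hξ : Irrational ξ) : 2 ≤ irrationalityExponent ξ := by
  have hinj : Function.Injective fun q : ℚ ↦ (q.num, q.den) := fun _ _ h ↦
    Rat.ext (Prod.ext_iff.1 h).1 (Prod.ext_iff.1 h).2
  refine le_sSup ⟨2, ((Real.infinite_rat_abs_sub_lt_one_div_den_sq_of_irrational hξ).image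
    hinj.injOn).mono ?_, rfl⟩
  rintro _ ⟨q, hq, rfl⟩
  refine ⟨q.pos, ?_⟩
  rw [Real.rpow_two, ← Rat.cast_def]
  exact hq

lemma one_add_vb'_le_irrationalityExponent {b : ℕ} (hb : 2 ≤ b) {ξ : ℝ} (hξ : Irrational ξ) :
    1 + vb' b ξ ≤ irrationalityExponent ξ := by
  refine one_add_sSup_coe_image_le fun v hv ↦ ?_
  rcases le_total 0 v with hv0 | hv0
  · exact le_sSup ⟨1 + v, rationalApproximations_infinite_of_vb'Solutions hb hv0 hv, rfl⟩
  · calc ((1 + v : ℝ) : EReal) ≤ (2 : ℝ) := by exact_mod_cast (by linarith : 1 + v ≤ 2)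
      _ ≤ irrationalityExponent ξ := two_le_irrationalityExponent hξ

/-- For every integer `b ≥ 2` and irrational `ξ`:
`v'_b(ξ) ≥ v_b(ξ) ≥ 0` and `μ(ξ) ≥ 1 + max(v'_b(ξ),1) ≥ 1 + max(v_b(ξ),1)`. -/
theorem exponents_inequalities (b : ℕ) (hb : 2 ≤ b) (ξ : ℝ) (hξ : Irrational ξ) :
    0 ≤ vb b ξ ∧ vb b ξ ≤ vb' b ξ ∧
    1 + max (vb b ξ) 1 ≤ 1 + max (vb' b ξ) 1 ∧
    1 + max (vb' b ξ) 1 ≤ irrationalityExponent ξ := by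
  have hvb : vb b ξ ≤ vb' b ξ := vb_le_vb' (by omega) ξ
  refine ⟨vb_nonneg b ξ, hvb, by gcongr, ?_⟩
  rw [← max_add_add_left]
  refine max_le (one_add_vb'_le_irrationalityExponent hb hξ) ?_
  calc (1 : EReal) + 1 = 2 := by norm_num
    _ ≤ irrationalityExponent ξ := two_le_irrationalityExponent hξ
end

section
/- Let p > q ≥ 1 be positive integers with p/q > 1, and define a set S = ⋃_{h≥0} {p·p^h, (p+1)·p^h, ..., (qp)·p^h} of positive integers. Let (n_j)_{j≥0} be the increasing enumeration of S. Then limsup_{j→∞} n_{j+1}/n_j = p/q. -/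
open Filter

/-- The set `⋃_{h ≥ 0} {p·p^h, (p+1)·p^h, …, (qp)·p^h}`. -/
def blockSet (p q : ℕ) : ℕ → Prop :=
  fun n => ∃ h i : ℕ, p ≤ i ∧ i ≤ q * p ∧ n = i * p ^ h

/-!
Since `q < p`, the blocks `{p·p^h, …, qp·p^h}` are disjoint and increase with `h`, so the
enumeration of `blockSet p q` is explicit: its `(L·h + r)`-th term is `(p + r)·p^h`, where
`L = qp - p + 1` is the block length. Inside a block the ratio of consecutive terms is
`(p + r + 1)/(p + r) ≤ (p + 1)/p < p/q`, and across the gap from `qp·p^h` to `p·p^(h+1)` it is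
exactly `p/q`. The ratios are thus bounded by `p/q` and equal to it once per block.
-/

theorem Nat.nth_eq_of_strictMono_of_range_eq {p : ℕ → Prop} {f : ℕ → ℕ} (hf : StrictMono f)
    (hrange : Set.range f = Set.ofPred p) : Nat.nth p = f := by
  have hinf : (Set.ofPred p).Infinite := hrange ▸ Set.infinite_range_of_injective hf.injective
  exact ((Nat.nth_strictMono hinf).range_inj hf).1
    ((Nat.range_nth_of_infinite hinf).trans hrange.symm)

theorem Filter.limsup_eq_of_eventually_le_of_frequently_ge {ι α : Type*}
    [ConditionallyCompleteLinearOrder α] {f : Filter ι} {u : ι → α} {a : α}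
    (hle : ∀ᶠ i in f, u i ≤ a) (hge : ∃ᶠ i in f, a ≤ u i) : limsup u f = a :=
  le_antisymm (limsup_le_of_le (IsCoboundedUnder.of_frequently_ge hge) hle)
    (le_limsup_of_frequently_le hge (isBoundedUnder_of_eventually_le hle))

namespace blockSet

variable {p q : ℕ}

variable (p q) in
def blockLength : ℕ := q * p - p + 1

variable (p q) in
def enum (j : ℕ) : ℕ := (p + j % blockLength p q) * p ^ (j / blockLength p q)

lemma blockLength_eq : blockLength p q = q * p - p + 1 := rfl

lemma blockLength_pos : 0 < blockLength p q := Nat.succ_pos _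

lemma enum_mul_add {h r : ℕ} (hr : r < blockLength p q) :
    enum p q (blockLength p q * h + r) = (p + r) * p ^ h := by
  rw [enum, Nat.mul_add_mod, Nat.mod_eq_of_lt hr, Nat.mul_add_div blockLength_pos,
    Nat.div_eq_of_lt hr, Nat.add_zero]

lemma enum_mul_add_succ_of_lt {h r : ℕ} (hr : r + 1 < blockLength p q) :
    enum p q (blockLength p q * h + r + 1) = (p + r + 1) * p ^ h :=
  enum_mul_add hr

lemma enum_mul_add_last (hq : 1 ≤ q) (h : ℕ) :
    enum p q (blockLength p q * h + (q * p - p)) = q * p * p ^ h := by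
  have hp : p ≤ q * p := Nat.le_mul_of_pos_left p hq
  rw [enum_mul_add (by rw [blockLength_eq]; omega), Nat.add_sub_cancel' hp]

lemma enum_mul_add_last_succ (h : ℕ) :
    enum p q (blockLength p q * h + (q * p - p) + 1) = p * p ^ (h + 1) := by
  have hidx : blockLength p q * h + (q * p - p) + 1 = blockLength p q * (h + 1) + 0 := by
    rw [mul_add, blockLength_eq]; omega
  rw [hidx, enum_mul_add blockLength_pos, Nat.add_zero]

lemma enum_pos (hp : 0 < p) (j : ℕ) : 0 < enum p q j :=
  Nat.mul_pos (Nat.add_pos_left hp _) (Nat.pow_pos hp)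

lemma index_inner_or_last (j : ℕ) :
    (∃ h r, r + 1 < blockLength p q ∧ j = blockLength p q * h + r) ∨ ∃ h, j = blockLength p q * h + (q * p - p) := by
  have hr := Nat.mod_lt j (blockLength_pos (p := p) (q := q))
  have hj := (Nat.div_add_mod j (blockLength p q)).symm
  rcases Nat.lt_or_ge (j % blockLength p q + 1) (blockLength p q) with hlt | hge
  · exact Or.inl ⟨_, _, hlt, hj⟩
  · refine Or.inr ⟨j / blockLength p q, ?_⟩
    have := blockLength_eq (p := p) (q := q)
    omega

lemma range_enum (hq : 1 ≤ q) : Set.range (enum p q) = Set.ofPred (blockSet p q) := by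
  have hp : p ≤ q * p := Nat.le_mul_of_pos_left p hq
  have hL := blockLength_eq (p := p) (q := q)
  ext n
  constructor
  · rintro ⟨j, rfl⟩
    have hr := Nat.mod_lt j (blockLength_pos (p := p) (q := q))
    exact ⟨_, _, Nat.le_add_right _ _, by omega, rfl⟩
  · rintro ⟨h, i, hpi, hiq, rfl⟩
    refine ⟨blockLength p q * h + (i - p), ?_⟩
    rw [enum_mul_add (by omega), Nat.add_sub_cancel' hpi]

lemma enum_lt_succ (hq : 1 ≤ q) (hpq : q < p) (j : ℕ) : enum p q j < enum p q (j + 1) := by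
  have hpow (h : ℕ) : 0 < p ^ h := Nat.pow_pos (by omega)
  rcases index_inner_or_last (p := p) (q := q) j with ⟨h, r, hr, rfl⟩ | ⟨h, rfl⟩
  · rw [enum_mul_add_succ_of_lt hr, enum_mul_add (by omega)]
    exact Nat.mul_lt_mul_of_pos_right (by omega) (hpow h)
  · rw [enum_mul_add_last_succ, enum_mul_add_last hq, pow_succ, mul_comm (p ^ h) p, ← mul_assoc]
    exact Nat.mul_lt_mul_of_pos_right (Nat.mul_lt_mul_of_pos_right hpq (by omega)) (hpow h)

lemma strictMono_enum (hq : 1 ≤ q) (hpq : q < p) : StrictMono (enum p q) :=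
  strictMono_nat_of_lt_succ (enum_lt_succ hq hpq)

lemma enum_last_succ_mul (hq : 1 ≤ q) (h : ℕ) :
    enum p q (blockLength p q * h + (q * p - p) + 1) * q =
      p * enum p q (blockLength p q * h + (q * p - p)) := by
  rw [enum_mul_add_last_succ, enum_mul_add_last hq]
  ring

lemma enum_succ_mul_le (hq : 1 ≤ q) (hpq : q < p) (j : ℕ) :
    enum p q (j + 1) * q ≤ p * enum p q j := by
  rcases index_inner_or_last (p := p) (q := q) j with ⟨h, r, hr, rfl⟩ | ⟨h, rfl⟩
  · rw [enum_mul_add_succ_of_lt hr, enum_mul_add (by omega)]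
    have hblock : (p + r + 1) * q ≤ p * (p + r) := by nlinarith
    calc (p + r + 1) * p ^ h * q = (p + r + 1) * q * p ^ h := by ring
      _ ≤ p * (p + r) * p ^ h := Nat.mul_le_mul_right _ hblock
      _ = p * ((p + r) * p ^ h) := by ring
  · exact (enum_last_succ_mul hq h).le

end blockSet

open blockSet

/-- If `p > q ≥ 1`, and `(n_j)` is the increasing enumeration of
`⋃_{h ≥ 0} {p·p^h, …, (qp)·p^h}`, then `limsup n_{j+1}/n_j = p/q`. -/
theorem limsup_ratio_blockSet (p q : ℕ) (hq : 1 ≤ q) (hpq : q < p) :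
    limsup (fun j => (Nat.nth (blockSet p q) (j + 1) : ℝ) / (Nat.nth (blockSet p q) j : ℝ))
      atTop = (p : ℝ) / (q : ℝ) := by
  rw [Nat.nth_eq_of_strictMono_of_range_eq (strictMono_enum hq hpq) (range_enum hq)]
  have hpos (j : ℕ) : (0 : ℝ) < enum p q j := by exact_mod_cast enum_pos (by omega) j
  have hq' : (0 : ℝ) < q := by exact_mod_cast hq
  refine limsup_eq_of_eventually_le_of_frequently_ge (Eventually.of_forall fun j => ?_) ?_
  · rw [div_le_div_iff₀ (hpos j) hq']
    exact_mod_cast enum_succ_mul_le hq hpq j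
  · refine (frequently_atTop.2 fun n => ⟨blockLength p q * n + (q * p - p), ?_, ?_⟩)
    · exact le_add_right (Nat.le_mul_of_pos_left n blockLength_pos)
    · rw [div_le_div_iff₀ hq' (hpos _)]
      exact_mod_cast (enum_last_succ_mul hq n).symm.le
end

section
/- Let b ≥ 2 be an integer, let h ≥ 2 be an integer, and define ξ = Σ_{j≥0} b^{−x_j} where x_0 = 1 and x_{j+1} = h·x_j (so x_j = h^j). Then v_b(ξ) = h − 1, where v_b(ξ) is the supremum of real numbers v such that ‖b^n ξ‖ < (b^n)^{−v} has infinitely many solutions in positive integers n. -/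
open Filter Set

/-! Write `ξ = ∑ b ^ (-h ^ j)` and let `h ^ J ≤ n < h ^ (J + 1)`. Then `b ^ n ξ` is an integer plus
`F = ∑_{j > J} b ^ (n - h ^ j)`; since the exponents increase strictly, this tail is dominated by
a geometric series, so `b ^ (n - h ^ (J + 1)) ≤ F ≤ 3 / 4`. As `h ^ (J + 1) ≤ h n`, this gives
`‖b ^ n ξ‖ ≥ (b ^ n) ^ (-(h - 1)) / 4` for every `n ≥ 1`, whereas for `n = h ^ J` the tail is
`F ≤ 2 (b ^ n) ^ (-(h - 1))`. The first bound forces `v_b(ξ) ≤ h - 1`, the second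
`v_b(ξ) ≥ h - 1`. -/

lemma distNearestInt_le (x : ℝ) (k : ℤ) : distNearestInt x ≤ |x - k| := round_le x k

lemma distNearestInt_natCast_add (N : ℕ) (x : ℝ) : distNearestInt (N + x) = distNearestInt x := by
  rw [distNearestInt, distNearestInt, round_natCast_add]
  push_cast
  ring_nf

lemma min_le_distNearestInt {x : ℝ} (h0 : 0 ≤ x) (h1 : x ≤ 1) :
    min x (1 - x) ≤ distNearestInt x := by
  rw [distNearestInt]
  rcases le_or_gt (round x) 0 with hr | hr
  · have : (round x : ℝ) ≤ 0 := by exact_mod_cast hr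
    exact (min_le_left _ _).trans (by rw [abs_of_nonneg (by linarith)]; linarith)
  · have : (1 : ℝ) ≤ round x := by exact_mod_cast hr
    exact (min_le_right _ _).trans (by rw [abs_sub_comm, abs_of_nonneg (by linarith)]; linarith)

lemma eventually_lt_pow_rpow {b : ℝ} (hb : 1 < b) {ε : ℝ} (hε : 0 < ε) (C : ℝ) :
    ∀ᶠ n : ℕ in atTop, C < (b ^ n) ^ ε := by
  have hlim := tendsto_pow_atTop_atTop_of_one_lt (Real.one_lt_rpow hb hε)
  filter_upwards [hlim.eventually_gt_atTop C] with n hn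
  rwa [← Real.rpow_natCast_mul (zero_le_one.trans hb.le), mul_comm,
    Real.rpow_mul_natCast (zero_le_one.trans hb.le)]

theorem vb_le_of_eventually_le {b : ℕ} (hb : 1 < b) {ξ w C : ℝ} (hC : 0 < C)
    (h : ∀ᶠ n : ℕ in atTop, C * ((b : ℝ) ^ n) ^ (-w) ≤ distNearestInt ((b : ℝ) ^ n * ξ)) :
    vb b ξ ≤ w := by
  refine sSup_le ?_
  rintro _ ⟨v, hv, rfl⟩
  rw [EReal.coe_le_coe_iff]
  by_contra! hwv
  refine Nat.frequently_atTop_iff_infinite.mpr hv ?_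
  filter_upwards [h, eventually_lt_pow_rpow (Nat.one_lt_cast.mpr hb) (sub_pos.2 hwv) C⁻¹]
    with n hn hlt
  rintro ⟨-, hd⟩
  have hpos : (0 : ℝ) < (b : ℝ) ^ n := by positivity
  have : ((b : ℝ) ^ n) ^ (-v) ≤ C * ((b : ℝ) ^ n) ^ (-w) := by
    rw [show -v = -w - (v - w) by ring, Real.rpow_sub hpos, mul_comm, ← div_inv_eq_mul]
    exact div_le_div_of_nonneg_left (by positivity) (by positivity) hlt.le
  linarith

theorem le_vb_of_frequently_le {b : ℕ} (hb : 1 < b) {ξ w C : ℝ}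
    (h : ∃ᶠ n : ℕ in atTop, distNearestInt ((b : ℝ) ^ n * ξ) ≤ C * ((b : ℝ) ^ n) ^ (-w)) :
    (w : EReal) ≤ vb b ξ := by
  refine le_of_forall_lt_imp_le_of_dense fun a ha => ?_
  obtain ⟨v, hav, hvw⟩ := EReal.exists_between_coe_real ha
  refine hav.le.trans (le_sSup (Set.mem_image_of_mem _ (Nat.frequently_atTop_iff_infinite.mp ?_)))
  have hvw : 0 < w - v := sub_pos.2 (EReal.coe_lt_coe_iff.mp hvw)
  refine (h.and_eventually ((eventually_gt_atTop 0).and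
    (eventually_lt_pow_rpow (Nat.one_lt_cast.mpr hb) hvw C))).mono ?_
  rintro n ⟨hd, hn, hlt⟩
  have hpos : (0 : ℝ) < (b : ℝ) ^ n := by positivity
  refine ⟨hn, hd.trans_lt ?_⟩
  rw [show -v = -w + (w - v) by ring, Real.rpow_add hpos, mul_comm]
  exact mul_lt_mul_of_pos_left hlt (by positivity)

section StrictMono

variable {b : ℝ} {x : ℕ → ℕ}

lemma pow_mul_inv_pow_le (hb : 1 ≤ b) {n k m : ℕ} (h : n + k ≤ m) :
    b ^ n * (b ^ m)⁻¹ ≤ (b ^ k)⁻¹ := by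
  have hb0 : 0 < b := zero_lt_one.trans_le hb
  calc b ^ n * (b ^ m)⁻¹ ≤ b ^ n * (b ^ (n + k))⁻¹ := by gcongr
    _ = (b ^ k)⁻¹ := by rw [pow_add, mul_inv, ← mul_assoc, mul_inv_cancel₀ (by positivity), one_mul]

lemma inv_pow_le_pow_mul_inv_pow (hb : 1 ≤ b) {n k m : ℕ} (h : m ≤ n + k) :
    (b ^ k)⁻¹ ≤ b ^ n * (b ^ m)⁻¹ := by
  have hb0 : 0 < b := zero_lt_one.trans_le hb
  calc (b ^ k)⁻¹ = b ^ n * (b ^ (n + k))⁻¹ := by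
        rw [pow_add, mul_inv, ← mul_assoc, mul_inv_cancel₀ (by positivity), one_mul]
    _ ≤ b ^ n * (b ^ m)⁻¹ := by gcongr

lemma inv_pow_le_geometric (hb : 1 ≤ b) (hx : StrictMono x) (j : ℕ) :
    (b ^ x j)⁻¹ ≤ (b ^ x 0)⁻¹ * b⁻¹ ^ j := by
  have hb0 : 0 < b := zero_lt_one.trans_le hb
  rw [inv_pow, ← mul_inv, ← pow_add]
  exact inv_anti₀ (by positivity)
    (pow_le_pow_right₀ hb (by simpa [add_comm] using hx.add_le_nat j 0))

lemma summable_inv_pow_of_strictMono (hb : 1 < b) (hx : StrictMono x) :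
    Summable fun j => (b ^ x j)⁻¹ :=
  have hb0 : 0 < b := zero_lt_one.trans hb
  .of_nonneg_of_le (fun j => by positivity) (inv_pow_le_geometric hb.le hx)
    ((summable_geometric_of_lt_one (by positivity) (inv_lt_one_of_one_lt₀ hb)).mul_left _)

lemma inv_pow_le_tsum_of_strictMono (hb : 1 < b) (hx : StrictMono x) :
    (b ^ x 0)⁻¹ ≤ ∑' j, (b ^ x j)⁻¹ :=
  have hb0 : 0 < b := zero_lt_one.trans hb
  (summable_inv_pow_of_strictMono hb hx).le_tsum 0 fun j _ => by positivity

lemma tsum_inv_pow_le_of_strictMono (hb : 2 ≤ b) (hx : StrictMono x) :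
    ∑' j, (b ^ x j)⁻¹ ≤ 2 * (b ^ x 0)⁻¹ := by
  have hb1 : 1 < b := by linarith
  have hr : b⁻¹ < 1 := inv_lt_one_of_one_lt₀ hb1
  have hr2 : b⁻¹ ≤ 2⁻¹ := inv_anti₀ two_pos hb
  calc ∑' j, (b ^ x j)⁻¹ ≤ ∑' j, (b ^ x 0)⁻¹ * b⁻¹ ^ j :=
        (summable_inv_pow_of_strictMono hb1 hx).tsum_le_tsum (inv_pow_le_geometric hb1.le hx)
          ((summable_geometric_of_lt_one (by positivity) hr).mul_left _)
    _ = (1 - b⁻¹)⁻¹ * (b ^ x 0)⁻¹ := by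
        rw [tsum_mul_left, tsum_geometric_of_lt_one (by positivity) hr, mul_comm]
    _ ≤ 2 * (b ^ x 0)⁻¹ := by
        gcongr
        rw [inv_le_comm₀ (by linarith) two_pos]
        linarith

lemma tsum_inv_pow_le_add_of_strictMono (hb : 2 ≤ b) (hx : StrictMono x) :
    ∑' j, (b ^ x j)⁻¹ ≤ (b ^ x 0)⁻¹ + 2 * (b ^ x 1)⁻¹ := by
  rw [(summable_inv_pow_of_strictMono (by linarith) hx).tsum_eq_zero_add]
  gcongr
  exact tsum_inv_pow_le_of_strictMono hb fun _ _ h => hx (Nat.add_lt_add_right h 1)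

end StrictMono

lemma exists_pow_mul_tsum_eq_natCast_add {b : ℕ} (hb : 1 < b) {x : ℕ → ℕ} (hx : StrictMono x)
    {n J : ℕ} (hJ : x J ≤ n) :
    ∃ N : ℕ, (b : ℝ) ^ n * ∑' j, ((b : ℝ) ^ x j)⁻¹
      = N + (b : ℝ) ^ n * ∑' j, ((b : ℝ) ^ x (j + (J + 1)))⁻¹ := by
  refine ⟨∑ j ∈ Finset.range (J + 1), b ^ (n - x j), ?_⟩
  rw [← (summable_inv_pow_of_strictMono (Nat.one_lt_cast.mpr hb) hx).sum_add_tsum_nat_add (J + 1),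
    mul_add, Finset.mul_sum]
  push_cast
  congr 1
  refine Finset.sum_congr rfl fun j hj => ?_
  rw [pow_sub₀ _ (by positivity) ((hx.monotone (Finset.mem_range_succ_iff.mp hj)).trans hJ)]

section Lacunary

variable {b h : ℕ}

lemma distNearestInt_pow_pow_mul_le (hb : 2 ≤ b) (hh : 1 < h) (J : ℕ) :
    distNearestInt ((b : ℝ) ^ h ^ J * ∑' j, ((b : ℝ) ^ h ^ j)⁻¹)
      ≤ 2 * (((b : ℝ) ^ h ^ J) ^ (h - 1))⁻¹ := by
  have hb' : (2 : ℝ) ≤ b := by exact_mod_cast hb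
  have hx : StrictMono (h ^ ·) := pow_right_strictMono₀ hh
  obtain ⟨N, hN⟩ := exists_pow_mul_tsum_eq_natCast_add hb hx le_rfl (n := h ^ J)
  have hx' : StrictMono fun j => h ^ (j + (J + 1)) := fun _ _ hij => hx (Nat.add_lt_add_right hij _)
  have hexp : h ^ J + h ^ J * (h - 1) ≤ h ^ (0 + (J + 1)) := by
    rw [zero_add, pow_succ, ← mul_one_add]; gcongr; omega
  calc distNearestInt ((b : ℝ) ^ h ^ J * ∑' j, ((b : ℝ) ^ h ^ j)⁻¹)
      ≤ |(b : ℝ) ^ h ^ J * ∑' j, ((b : ℝ) ^ h ^ j)⁻¹ - (N : ℤ)| := distNearestInt_le _ _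
    _ = (b : ℝ) ^ h ^ J * ∑' j, ((b : ℝ) ^ h ^ (j + (J + 1)))⁻¹ := by
        rw [hN, Int.cast_natCast, add_sub_cancel_left, abs_of_nonneg (by positivity)]
    _ ≤ (b : ℝ) ^ h ^ J * (2 * ((b : ℝ) ^ h ^ (0 + (J + 1)))⁻¹) := by
        gcongr; exact tsum_inv_pow_le_of_strictMono hb' hx'
    _ ≤ 2 * (((b : ℝ) ^ h ^ J) ^ (h - 1))⁻¹ := by
        rw [mul_left_comm, ← pow_mul]
        gcongr
        exact pow_mul_inv_pow_le (by linarith) hexp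

lemma pow_mul_tsum_tail_le (hb : 2 ≤ b) (hh : 1 < h) {n J : ℕ} (hnJ : n < h ^ (J + 1)) :
    (b : ℝ) ^ n * ∑' j, ((b : ℝ) ^ h ^ (j + (J + 1)))⁻¹ ≤ 3 / 4 := by
  have hb' : (2 : ℝ) ≤ b := by exact_mod_cast hb
  have hx : StrictMono fun j => h ^ (j + (J + 1)) :=
    fun _ _ hij => pow_right_strictMono₀ hh (Nat.add_lt_add_right hij _)
  have hexp₁ : n + 1 ≤ h ^ (0 + (J + 1)) := by rw [zero_add]; exact hnJ
  have hexp₂ : n + 3 ≤ h ^ (1 + (J + 1)) := by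
    have : 2 ≤ h ^ (J + 1) := le_self_pow₀ hh.le (by omega) |>.trans' hh
    rw [add_comm 1, pow_succ]; nlinarith
  have h₁ := pow_mul_inv_pow_le (b := (b : ℝ)) (by linarith) hexp₁
  have h₂ := pow_mul_inv_pow_le (b := (b : ℝ)) (by linarith) hexp₂
  have : ((b : ℝ) ^ 1)⁻¹ ≤ 2⁻¹ := by rw [pow_one]; exact inv_anti₀ two_pos hb'
  have : ((b : ℝ) ^ 3)⁻¹ ≤ 8⁻¹ :=
    inv_anti₀ (by norm_num) (by linarith [pow_le_pow_left₀ zero_le_two hb' 3])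
  calc (b : ℝ) ^ n * ∑' j, ((b : ℝ) ^ h ^ (j + (J + 1)))⁻¹
      ≤ (b : ℝ) ^ n * (((b : ℝ) ^ h ^ (0 + (J + 1)))⁻¹ + 2 * ((b : ℝ) ^ h ^ (1 + (J + 1)))⁻¹) := by
        gcongr; exact tsum_inv_pow_le_add_of_strictMono hb' hx
    _ ≤ 3 / 4 := by linarith

lemma le_distNearestInt_pow_mul (hb : 2 ≤ b) (hh : 1 < h) {n : ℕ} (hn : 0 < n) :
    (((b : ℝ) ^ n) ^ (h - 1))⁻¹ / 4 ≤ distNearestInt ((b : ℝ) ^ n * ∑' j, ((b : ℝ) ^ h ^ j)⁻¹) := by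
  have hb' : (2 : ℝ) ≤ b := by exact_mod_cast hb
  have hx : StrictMono (h ^ ·) := pow_right_strictMono₀ hh
  set J := Nat.log h n
  have hJn : h ^ J ≤ n := Nat.pow_log_le_self h hn.ne'
  have hnJ : n < h ^ (J + 1) := Nat.lt_pow_succ_log_self hh n
  have hexp₁ : h ^ (0 + (J + 1)) ≤ n + n * (h - 1) := by
    rw [zero_add, pow_succ, ← mul_one_add]; gcongr; omega
  have hx' : StrictMono fun j => h ^ (j + (J + 1)) := fun _ _ hij => hx (Nat.add_lt_add_right hij _)
  obtain ⟨N, hN⟩ := exists_pow_mul_tsum_eq_natCast_add hb hx hJn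
  set F := (b : ℝ) ^ n * ∑' j, ((b : ℝ) ^ h ^ (j + (J + 1)))⁻¹ with hF
  have hu : (((b : ℝ) ^ n) ^ (h - 1))⁻¹ ≤ F := by
    rw [← pow_mul, hF]
    exact (inv_pow_le_pow_mul_inv_pow (by linarith) hexp₁).trans
      (by gcongr; exact inv_pow_le_tsum_of_strictMono (by linarith) hx')
  have hF34 : F ≤ 3 / 4 := pow_mul_tsum_tail_le hb hh hnJ
  have hu0 : 0 ≤ (((b : ℝ) ^ n) ^ (h - 1))⁻¹ := by positivity
  have hu1 : (((b : ℝ) ^ n) ^ (h - 1))⁻¹ ≤ 1 :=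
    inv_le_one_of_one_le₀ (one_le_pow₀ (one_le_pow₀ (by linarith)))
  rw [hN, distNearestInt_natCast_add]
  calc (((b : ℝ) ^ n) ^ (h - 1))⁻¹ / 4 ≤ min (((b : ℝ) ^ n) ^ (h - 1))⁻¹ (1 / 4) :=
        le_min (by linarith) (by linarith)
    _ ≤ min F (1 - F) := min_le_min hu (by linarith)
    _ ≤ distNearestInt F := min_le_distNearestInt (by linarith) (by linarith)

end Lacunary

/-- For `b ≥ 2`, `h ≥ 2` and `ξ = ∑_{j ≥ 0} b^{-h^j}`, one has `v_b(ξ) = h - 1`. -/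
theorem vb_of_geometric_lacunary (b : ℕ) (hb : 2 ≤ b) (h : ℕ) (hh : 2 ≤ h) :
    vb b (∑' j : ℕ, ((b : ℝ) ^ (h ^ j))⁻¹) = (h : EReal) - 1 := by
  have hrpow (x : ℝ) : x ^ (-((h : ℝ) - 1)) = (x ^ (h - 1))⁻¹ := by
    rw [← Nat.cast_pred (by omega), Real.rpow_neg_natCast, zpow_neg, zpow_natCast]
  rw [show (h : EReal) - 1 = ((h - 1 : ℝ) : EReal) by simp]
  refine le_antisymm (vb_le_of_eventually_le hb (C := 1 / 4) (by norm_num) ?_)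
    (le_vb_of_frequently_le hb (C := 2) ?_)
  · filter_upwards [eventually_gt_atTop 0] with n hn
    rw [hrpow, one_div_mul_eq_div]
    exact le_distNearestInt_pow_mul hb hh hn
  · refine frequently_atTop.2 fun a => ⟨h ^ a, (Nat.lt_pow_self hh).le, ?_⟩
    rw [hrpow]
    exact distNearestInt_pow_pow_mul_le hb hh a
end
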